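/- arXiv:2310.13390 — 2 statements merged into one kernel-verified Lean document; each statement's English description precedes it below -/
import Mathlib

section
/- Let (g,∇) be a statistical structure with difference tensor K, first Koszul form τ, scalar curvature ρ = tr_g Ric of ∇ and Riemannian scalar curvature ρ^g. Then ρ^g = ρ + ‖K‖² − ‖τ‖², where ‖K‖² is the squared g-norm of the tensor K and ‖τ‖² that of τ. -/
open scoped BigOperators

/-- An algebraic model of the calculus of vector fields on a manifold:
`F` plays the role of smooth functions, `V` of vector fields, with the
action of vector fields on functions as derivations, the Lie bracket,
and a (pseudo-)Riemannian metric `g`. -/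
structure GeomSetting (F V : Type*) [CommRing F] [AddCommGroup V] [Module F V] where
  act : V → F → F
  act_add_left : ∀ X Y f, act (X + Y) f = act X f + act Y f
  act_smul_left : ∀ (h : F) (X : V) (f : F), act (h • X) f = h * act X f
  act_add_right : ∀ X f h, act X (f + h) = act X f + act X h
  act_mul : ∀ X f h, act X (f * h) = act X f * h + f * act X h
  bracket : V → V → V
  bracket_skew : ∀ X Y, bracket X Y = - bracket Y X
  act_bracket : ∀ X Y f, act (bracket X Y) f = act X (act Y f) - act Y (act X f)
  g : V → V → F
  g_symm : ∀ X Y, g X Y = g Y X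
  g_add_left : ∀ X Y Z, g (X + Y) Z = g X Z + g Y Z
  g_smul_left : ∀ (f : F) (X Y : V), g (f • X) Y = f * g X Y
  g_nondeg : ∀ X, (∀ Y, g X Y = 0) → X = 0

namespace GeomSetting

variable {F V : Type*} [CommRing F] [AddCommGroup V] [Module F V]

/-- An affine connection on vector fields. -/
structure Conn (S : GeomSetting F V) where
  D : V → V → V
  add_left : ∀ X Y Z, D (X + Y) Z = D X Z + D Y Z
  smul_left : ∀ (f : F) (X Y : V), D (f • X) Y = f • D X Y
  add_right : ∀ X Y Z, D X (Y + Z) = D X Y + D X Z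
  leibniz : ∀ (X : V) (f : F) (Y : V), D X (f • Y) = S.act X f • Y + f • D X Y

variable (S : GeomSetting F V)

/-- A connection is torsion free. -/
def TorsionFree (C : S.Conn) : Prop := ∀ X Y, C.D X Y - C.D Y X = S.bracket X Y

/-- The cubic form `(∇g)(X;Y,Z) = (∇_X g)(Y,Z)`. -/
def nablaG (C : S.Conn) (X Y Z : V) : F :=
  S.act X (S.g Y Z) - S.g (C.D X Y) Z - S.g Y (C.D X Z)

/-- `C` is the Levi-Civita connection of `g`: torsion free and metric. -/
def IsLeviCivita (C : S.Conn) : Prop :=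
  S.TorsionFree C ∧ ∀ X Y Z, S.nablaG C X Y Z = 0

/-- `(g, C)` is a statistical structure: `C` is torsion free and `∇g` is
totally symmetric. -/
def IsStatistical (C : S.Conn) : Prop :=
  S.TorsionFree C ∧ ∀ X Y Z, S.nablaG C X Y Z = S.nablaG C Y X Z

/-- `Cs` is the conjugate (dual) connection of `C` with respect to `g`:
`g(∇_X Y, Z) + g(Y, ∇*_X Z) = X g(Y,Z)`. -/
def IsConjugate (C Cs : S.Conn) : Prop :=
  ∀ X Y Z, S.g (C.D X Y) Z + S.g Y (Cs.D X Z) = S.act X (S.g Y Z)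

/-- The curvature tensor `R(X,Y)Z` of a connection. -/
def curv (C : S.Conn) (X Y Z : V) : V :=
  C.D X (C.D Y Z) - C.D Y (C.D X Z) - C.D (S.bracket X Y) Z

/-- The difference tensor `K = ∇ − ∇'` of two connections. -/
def diff (C Cg : S.Conn) (X Y : V) : V := C.D X Y - Cg.D X Y

/-- The covariant derivative `(∇_X K)(Y,Z)` of a (1,2)-tensor. -/
def cov2 (C : S.Conn) (K : V → V → V) (X Y Z : V) : V :=
  C.D X (K Y Z) - K (C.D X Y) Z - K Y (C.D X Z)

/-- The covariant derivative `(∇_X T)(A,B,E)` of a (1,3)-tensor. -/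
def cov3 (C : S.Conn) (T : V → V → V → V) (X A B E : V) : V :=
  C.D X (T A B E) - T (C.D X A) B E - T A (C.D X B) E - T A B (C.D X E)

/-- The curvature-like tensor `[K,K](X,Y)Z = K_X K_Y Z − K_Y K_X Z`. -/
def KK (K : V → V → V) (X Y Z : V) : V := K X (K Y Z) - K Y (K X Z)

/-- `K` is a (1,2)-tensor field: bilinear over functions. -/
def IsTensor12 (K : V → V → V) : Prop :=
  (∀ X Y Z, K (X + Y) Z = K X Z + K Y Z) ∧ (∀ (f : F) (X Y : V), K (f • X) Y = f • K X Y) ∧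
  (∀ X Y Z, K X (Y + Z) = K X Y + K X Z) ∧ (∀ (f : F) (X Y : V), K X (f • Y) = f • K X Y)

/-- A (local) orthonormal frame with the expansion property. -/
def IsONFrame {n : ℕ} (e : Fin n → V) : Prop :=
  (∀ i j, S.g (e i) (e j) = if i = j then 1 else 0) ∧
  (∀ X : V, X = ∑ i, S.g X (e i) • e i)

/-- The trace of an endomorphism of vector fields, computed in an
orthonormal frame. -/
def tr {n : ℕ} (e : Fin n → V) (A : V → V) : F := ∑ i, S.g (A (e i)) (e i)

end GeomSetting

/-- `ρ^g = ρ + ‖K‖² − ‖τ‖²`. -/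
theorem statement12 {F V : Type*} [CommRing F] [AddCommGroup V] [Module F V]
    (S : GeomSetting F V) (C Cg : S.Conn)
    (hCg : S.IsLeviCivita Cg) (hC : S.IsStatistical C)
    {n : ℕ} (e : Fin n → V) (he : S.IsONFrame e) :
    ∑ j, S.tr e (fun Z => S.curv Cg Z (e j) (e j)) =
      ∑ j, S.tr e (fun Z => S.curv C Z (e j) (e j))
        + (∑ i, ∑ j, S.g (S.diff C Cg (e i) (e j)) (S.diff C Cg (e i) (e j)))
        - ∑ i, (S.tr e (S.diff C Cg (e i))) ^ 2 := by

  classical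
  obtain ⟨hgt, hgm⟩ := hCg
  obtain ⟨hct, hcs⟩ := hC
  set K : V → V → V := S.diff C Cg with hK
  have Kdef : ∀ A B : V, K A B = C.D A B - Cg.D A B := fun A B => by rw [hK]; rfl
  have expand : ∀ A B : V, C.D A B = Cg.D A B + K A B := by
    intro A B; rw [Kdef]; abel
  have g_add_right : ∀ X Y Z : V, S.g X (Y + Z) = S.g X Y + S.g X Z := by
    intro X Y Z; rw [S.g_symm, S.g_add_left, S.g_symm Y X, S.g_symm Z X]
  have g_smul_right : ∀ (f : F) (X Y : V), S.g X (f • Y) = f * S.g X Y := by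
    intro f X Y; rw [S.g_symm, S.g_smul_left, S.g_symm]
  have g_sub_left : ∀ X Y Z : V, S.g (X - Y) Z = S.g X Z - S.g Y Z := by
    intro X Y Z
    have h : S.g ((X - Y) + Y) Z = S.g (X - Y) Z + S.g Y Z := S.g_add_left _ _ _
    have h2 : (X - Y) + Y = X := by abel
    rw [h2] at h
    linear_combination -h
  have D_sub_left : ∀ (Cc : S.Conn) (X Y Z : V), Cc.D (X - Y) Z = Cc.D X Z - Cc.D Y Z := by
    intro Cc X Y Z
    have h : Cc.D ((X - Y) + Y) Z = Cc.D (X - Y) Z + Cc.D Y Z := Cc.add_left _ _ _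
    have h2 : (X - Y) + Y = X := by abel
    rw [h2] at h
    rw [eq_sub_iff_add_eq]
    exact h.symm
  have K_symm : ∀ X Y : V, K X Y = K Y X := by
    intro X Y
    have h : C.D X Y - C.D Y X = Cg.D X Y - Cg.D Y X := (hct X Y).trans (hgt X Y).symm
    rw [Kdef, Kdef]
    exact sub_eq_sub_iff_sub_eq_sub.mp h
  have K_sub_left : ∀ A B Z : V, K (A - B) Z = K A Z - K B Z := by
    intro A B Z
    rw [Kdef, Kdef, Kdef, D_sub_left C, D_sub_left Cg]
    abel
  have met : ∀ X Y Z : V, S.act X (S.g Y Z) = S.g (Cg.D X Y) Z + S.g Y (Cg.D X Z) := by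
    intro X Y Z
    have h := hgm X Y Z
    simp only [GeomSetting.nablaG] at h
    linear_combination h
  have E : ∀ X Y Z : V, S.g Y (K X Z) = S.g X (K Y Z) := by
    intro X Y Z
    have h := hcs X Y Z
    simp only [GeomSetting.nablaG] at h
    rw [expand X Y, expand X Z, expand Y X, expand Y Z] at h
    rw [S.g_add_left, S.g_add_left, g_add_right, g_add_right] at h
    rw [met X Y Z, met Y X Z, K_symm X Y] at h
    linear_combination -h
  have B23 : ∀ X Y Z : V, S.g (K X Y) Z = S.g (K X Z) Y := by
    intro X Y Z
    calc S.g (K X Y) Z = S.g Z (K X Y) := S.g_symm _ _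
      _ = S.g X (K Z Y) := E X Z Y
      _ = S.g X (K Y Z) := by rw [K_symm Z Y]
      _ = S.g Y (K X Z) := (E X Y Z).symm
      _ = S.g (K X Z) Y := S.g_symm _ _
  have DKsym : ∀ X Y Z W : V,
      S.g (S.cov2 Cg K X Y Z) W = S.g (S.cov2 Cg K X Y W) Z := by
    intro X Y Z W
    simp only [GeomSetting.cov2]
    rw [g_sub_left, g_sub_left, g_sub_left, g_sub_left]
    have h1 := met X (K Y Z) W
    have h2 := met X (K Y W) Z
    have h3 : S.act X (S.g (K Y Z) W) = S.act X (S.g (K Y W) Z) := by rw [B23 Y Z W]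
    have h4 := B23 Y Z (Cg.D X W)
    have h5 := B23 (Cg.D X Y) Z W
    have h6 := B23 Y (Cg.D X Z) W
    linear_combination -h1 + h2 + h3 - h4 - h5 - h6
  have curvdec : ∀ X Y Z : V, S.curv C X Y Z =
      S.curv Cg X Y Z + S.cov2 Cg K X Y Z - S.cov2 Cg K Y X Z
        + (K X (K Y Z) - K Y (K X Z)) := by
    intro X Y Z
    have hb : S.bracket X Y = Cg.D X Y - Cg.D Y X := (hgt X Y).symm
    simp only [GeomSetting.curv, GeomSetting.cov2]
    rw [expand Y Z, C.add_right, expand X (Cg.D Y Z), expand X (K Y Z),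
        expand X Z, C.add_right, expand Y (Cg.D X Z), expand Y (K X Z),
        hb, expand (Cg.D X Y - Cg.D Y X) Z]
    simp only [D_sub_left Cg, K_sub_left]
    abel
  have g_sum_left : ∀ (f : Fin n → V) (Z : V),
      S.g (∑ i, f i) Z = ∑ i, S.g (f i) Z := by
    intro f Z
    exact map_sum (AddMonoidHom.mk' (fun X => S.g X Z) (fun a b => S.g_add_left a b Z)) f
      Finset.univ
  have g_sum_right : ∀ (X : V) (f : Fin n → V),
      S.g X (∑ i, f i) = ∑ i, S.g X (f i) := by
    intro X f
    rw [S.g_symm, g_sum_left]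
    exact Finset.sum_congr rfl fun i _ => S.g_symm _ _
  set T : V := ∑ i, K (e i) (e i) with hT
  have tau_eq : ∀ i, (∑ j, S.g (K (e i) (e j)) (e j)) = S.g T (e i) := by
    intro i
    rw [hT, g_sum_left]
    refine Finset.sum_congr rfl fun j _ => ?_
    rw [K_symm (e i) (e j), B23 (e j) (e i) (e j)]
  have hTT : S.g T T = ∑ i, S.g T (e i) * S.g T (e i) := by
    calc S.g T T = S.g T (∑ i, S.g T (e i) • e i) := by rw [← he.2 T]
      _ = ∑ i, S.g T (S.g T (e i) • e i) := g_sum_right T _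
      _ = ∑ i, S.g T (e i) * S.g T (e i) :=
          Finset.sum_congr rfl fun i _ => g_smul_right _ _ _
  have hY1 : (∑ j, ∑ i, S.g (K (e i) (K (e j) (e j))) (e i))
      = ∑ i, (∑ j, S.g (K (e i) (e j)) (e j)) ^ 2 := by
    have h1 : ∀ i j : Fin n, S.g (K (e i) (K (e j) (e j))) (e i)
        = S.g (K (e i) (e i)) (K (e j) (e j)) := fun i j => B23 _ _ _
    calc (∑ j, ∑ i, S.g (K (e i) (K (e j) (e j))) (e i))
        = ∑ j, ∑ i, S.g (K (e i) (e i)) (K (e j) (e j)) :=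
          Finset.sum_congr rfl fun j _ => Finset.sum_congr rfl fun i _ => h1 i j
      _ = ∑ j, S.g T (K (e j) (e j)) := by
          refine Finset.sum_congr rfl fun j _ => ?_
          rw [hT, g_sum_left]
      _ = S.g T T := by rw [← g_sum_right, ← hT]
      _ = ∑ i, S.g T (e i) * S.g T (e i) := hTT
      _ = ∑ i, (∑ j, S.g (K (e i) (e j)) (e j)) ^ 2 := by
          refine Finset.sum_congr rfl fun i _ => ?_
          rw [tau_eq i]; ring
  have hY2 : (∑ j, ∑ i, S.g (K (e j) (K (e i) (e j))) (e i))
      = ∑ i, ∑ j, S.g (K (e i) (e j)) (K (e i) (e j)) := by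
    have h1 : ∀ i j : Fin n, S.g (K (e j) (K (e i) (e j))) (e i)
        = S.g (K (e i) (e j)) (K (e i) (e j)) := by
      intro i j
      rw [B23 (e j) (K (e i) (e j)) (e i), K_symm (e j) (e i)]
    calc (∑ j, ∑ i, S.g (K (e j) (K (e i) (e j))) (e i))
        = ∑ j, ∑ i, S.g (K (e i) (e j)) (K (e i) (e j)) :=
          Finset.sum_congr rfl fun j _ => Finset.sum_congr rfl fun i _ => h1 i j
      _ = ∑ i, ∑ j, S.g (K (e i) (e j)) (K (e i) (e j)) := Finset.sum_comm.symm
  have hX : (∑ j, ∑ i, S.g (S.cov2 Cg K (e i) (e j) (e j)) (e i))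
      = ∑ j, ∑ i, S.g (S.cov2 Cg K (e j) (e i) (e j)) (e i) := by
    have h1 : ∀ i j : Fin n, S.g (S.cov2 Cg K (e i) (e j) (e j)) (e i)
        = S.g (S.cov2 Cg K (e i) (e j) (e i)) (e j) := fun i j => DKsym _ _ _ _
    calc (∑ j, ∑ i, S.g (S.cov2 Cg K (e i) (e j) (e j)) (e i))
        = ∑ j, ∑ i, S.g (S.cov2 Cg K (e i) (e j) (e i)) (e j) :=
          Finset.sum_congr rfl fun j _ => Finset.sum_congr rfl fun i _ => h1 i j
      _ = ∑ j, ∑ i, S.g (S.cov2 Cg K (e j) (e i) (e j)) (e i) := Finset.sum_comm.symm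
  have glin : ∀ a b c d f W : V, S.g (a + b - c + (d - f)) W
      = S.g a W + S.g b W - S.g c W + (S.g d W - S.g f W) := by
    intro a b c d f W
    rw [S.g_add_left, g_sub_left, S.g_add_left, g_sub_left]
  have step : ∀ i j : Fin n, S.g (S.curv C (e i) (e j) (e j)) (e i) =
      S.g (S.curv Cg (e i) (e j) (e j)) (e i)
      + S.g (S.cov2 Cg K (e i) (e j) (e j)) (e i)
      - S.g (S.cov2 Cg K (e j) (e i) (e j)) (e i)
      + (S.g (K (e i) (K (e j) (e j))) (e i)
      - S.g (K (e j) (K (e i) (e j))) (e i)) := by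
    intro i j
    rw [curvdec, glin]
  have H1 : (∑ j, ∑ i, S.g (S.curv C (e i) (e j) (e j)) (e i))
      = (∑ j, ∑ i, S.g (S.curv Cg (e i) (e j) (e j)) (e i))
      + (∑ j, ∑ i, S.g (S.cov2 Cg K (e i) (e j) (e j)) (e i))
      - (∑ j, ∑ i, S.g (S.cov2 Cg K (e j) (e i) (e j)) (e i))
      + ((∑ j, ∑ i, S.g (K (e i) (K (e j) (e j))) (e i))
      - (∑ j, ∑ i, S.g (K (e j) (K (e i) (e j))) (e i))) := by
    simp only [step, Finset.sum_add_distrib, Finset.sum_sub_distrib]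
  simp only [GeomSetting.tr]
  linear_combination -H1 - hX + hY2 - hY1
end

section
/- Let (g,∇) be a statistical structure with difference tensor K and curvature R of ∇. Define R₁ by g(W,R₁(X,Y,Z)) = (1/2)g(R(W,X)Y,Z). Then for all X,Y,Z,V,W: g((∇_X R₁)(Z,V,Y),W) = (1/2) g((∇_X R)(W,Z)V, Y) + g(R(K(X,W),Z)V, Y) − g(R(W,Z)V, K(X,Y)). -/
open scoped BigOperators

section Aux

namespace GeomSetting

variable {F V : Type*} [CommRing F] [AddCommGroup V] [Module F V] (S : GeomSetting F V)

lemma g_neg_left (A B : V) : S.g (-A) B = - S.g A B := by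
  rw [← neg_one_smul F A, S.g_smul_left]; ring

lemma g_sub_left (A B E : V) : S.g (A - B) E = S.g A E - S.g B E := by
  rw [sub_eq_add_neg, S.g_add_left, S.g_neg_left, ← sub_eq_add_neg]

lemma g_sub_right (A B E : V) : S.g A (B - E) = S.g A B - S.g A E := by
  rw [S.g_symm, S.g_sub_left, S.g_symm B A, S.g_symm E A]

end GeomSetting

end Aux

/-- formula for `g((∇_X R₁)(Z,V,Y),W)`. -/
theorem statement19 {F V : Type*} [CommRing F] [Algebra ℝ F]
    [AddCommGroup V] [Module F V]
    (S : GeomSetting F V) (C Cg : S.Conn)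
    (hCg : S.IsLeviCivita Cg) (hC : S.IsStatistical C)
    (R1 : V → V → V → V)
    (hR1 : ∀ W X Y Z, S.g W (R1 X Y Z) = ((1:ℝ)/2) • S.g (S.curv C W X Y) Z) :
    ∀ X Y Z Vv W,
      S.g (S.cov3 C R1 X Z Vv Y) W =
        ((1:ℝ)/2) • S.g (S.cov3 C (S.curv C) X W Z Vv) Y
          + S.g (S.curv C (S.diff C Cg X W) Z Vv) Y
          - S.g (S.curv C W Z Vv) (S.diff C Cg X Y) := by
  obtain ⟨hCgTF, hCgM⟩ := hCg
  obtain ⟨hCTF, hCS⟩ := hC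
  -- metric property of Cg
  have hmetric : ∀ A B E, S.act A (S.g B E) = S.g (Cg.D A B) E + S.g B (Cg.D A E) := by
    intro A B E
    have h := hCgM A B E
    unfold GeomSetting.nablaG at h
    linear_combination h
  have e1 : ∀ P Q, Cg.D P Q = C.D P Q - S.diff C Cg P Q := by
    intro P Q; exact (sub_sub_cancel _ _).symm
  have hKsymm : ∀ A B, S.diff C Cg A B = S.diff C Cg B A := by
    intro A B
    have h := (hCTF A B).trans (hCgTF A B).symm
    exact sub_eq_sub_iff_sub_eq_sub.mp h
  -- expanded metric identity
  have hm2 : ∀ A B E, S.act A (S.g B E)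
      = S.g (C.D A B) E - S.g (S.diff C Cg A B) E
        + (S.g B (C.D A E) - S.g B (S.diff C Cg A E)) := by
    intro A B E
    rw [hmetric A B E, e1, e1, S.g_sub_left, S.g_sub_right]
  have hT2 : ∀ A B E, S.g B (S.diff C Cg A E) = S.g A (S.diff C Cg B E) := by
    intro A B E
    have h1 := hCS A B E
    unfold GeomSetting.nablaG at h1
    have m1 := hm2 A B E
    have m2 := hm2 B A E
    have hsym : S.g (S.diff C Cg A B) E = S.g (S.diff C Cg B A) E := by
      rw [hKsymm A B]
    linear_combination -h1 + m1 - m2 - hsym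
  have hT : ∀ A B E, S.g (S.diff C Cg A B) E = S.g B (S.diff C Cg A E) := by
    intro A B E
    calc S.g (S.diff C Cg A B) E = S.g E (S.diff C Cg A B) := S.g_symm _ _
      _ = S.g E (S.diff C Cg B A) := by rw [hKsymm A B]
      _ = S.g B (S.diff C Cg E A) := hT2 B E A
      _ = S.g B (S.diff C Cg A E) := by rw [hKsymm E A]
  -- the key derivation identity
  have hD : ∀ A B E, S.g (C.D A B) E
      = S.act A (S.g B E) - S.g B (C.D A E)
        + (S.g B (S.diff C Cg A E) + S.g B (S.diff C Cg A E)) := by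
    intro A B E
    have m1 := hm2 A B E
    have t := hT A B E
    linear_combination t - m1
  have hR1' : ∀ (B A1 A2 A3 : V), S.g (R1 A1 A2 A3) B
      = ((1:ℝ)/2) • S.g (S.curv C B A1 A2) A3 :=
    fun B A1 A2 A3 => (S.g_symm _ _).trans (hR1 B A1 A2 A3)
  -- act kills rational constants
  have hact1 : ∀ A : V, S.act A (1:F) = 0 := by
    intro A
    have h := S.act_mul A 1 1
    simp only [one_mul, mul_one] at h
    linear_combination -h
  have hc1 : (((1:ℝ)/2) • (1:F)) + (((1:ℝ)/2) • (1:F)) = 1 := by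
    rw [← add_smul]; norm_num
  have hc : ∀ A : V, S.act A (((1:ℝ)/2) • (1:F)) = 0 := by
    intro A
    have hc0 : S.act A (((1:ℝ)/2) • (1:F)) + S.act A (((1:ℝ)/2) • (1:F)) = 0 := by
      rw [← S.act_add_right, hc1, hact1]
    linear_combination (((1:ℝ)/2) • (1:F)) * hc0 - S.act A (((1:ℝ)/2) • (1:F)) * hc1
  have hhalf : ∀ (A : V) (f : F), S.act A (((1:ℝ)/2) • f) = ((1:ℝ)/2) • S.act A f := by
    intro A f
    rw [show ((1:ℝ)/2) • f = (((1:ℝ)/2) • (1:F)) * f from by rw [smul_mul_assoc, one_mul],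
      S.act_mul, hc, zero_mul, zero_add, smul_mul_assoc, one_mul]
  intro X Y Z Vv W
  simp only [GeomSetting.cov3, S.g_sub_left, hD, hR1', hhalf]
  module
end
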